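/- arXiv:2503.18496 — 2 statements merged into one kernel-verified Lean document; each statement's English description precedes it below -/
import Mathlib

section
/- Let 0 < ε < 1, M ∈ ℝ^{m×n}, b ∈ ℝ^m, and let Ω ∈ ℝ^{d×m} be an ε-embedding of the subspace of ℝ^m spanned by the columns of M together with b. Let x* be a minimizer of ‖Mx − b‖₂ over x ∈ ℝ^n and let x̂ be a minimizer of ‖Ω(Mx − b)‖₂ over x ∈ ℝ^n. Then (1/√(1+ε))·‖Ω(Mx̂ − b)‖₂ ≤ ‖Mx* − b‖₂ ≤ (1/√(1−ε))·‖Ω(Mx̂ − b)‖₂. -/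
open Matrix

/-- Euclidean (ℓ₂) norm of a vector in `ℝ^m`. -/
noncomputable def norm2 {m : ℕ} (x : Fin m → ℝ) : ℝ := Real.sqrt (x ⬝ᵥ x)

/-- `Ω` is an `ε`-embedding of the subspace `V ⊆ ℝ^m`:
`|⟨Ωx, Ωy⟩ − ⟨x, y⟩| ≤ ε‖x‖₂‖y‖₂` for all `x, y ∈ V`. -/
def IsEmbedding {d m : ℕ} (ε : ℝ) (Ω : Matrix (Fin d) (Fin m) ℝ)
    (V : Submodule ℝ (Fin m → ℝ)) : Prop :=
  ∀ x ∈ V, ∀ y ∈ V, |(Ω.mulVec x) ⬝ᵥ (Ω.mulVec y) - x ⬝ᵥ y| ≤ ε * norm2 x * norm2 y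

/-- The `i`-th largest singular value (`0`-indexed) of a real matrix `A`:
the square root of the `i`-th largest eigenvalue of `AᵀA`. -/
noncomputable def singularValues {m n : ℕ} (A : Matrix (Fin m) (Fin n) ℝ) (i : Fin n) : ℝ :=
  Real.sqrt ((show (Aᵀ * A).IsHermitian by simpa using Matrix.isHermitian_conjTranspose_mul_self A).eigenvalues
    (Tuple.sort (show (Aᵀ * A).IsHermitian by simpa using Matrix.isHermitian_conjTranspose_mul_self A).eigenvalues i.rev))

/-- `P` is a permutation matrix. -/
def IsPermMatrix {n : ℕ} (P : Matrix (Fin n) (Fin n) ℝ) : Prop :=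
  ∃ σ : Equiv.Perm (Fin n), P = σ.permMatrix ℝ

/-- `A = Q * [[R₁₁, R₁₂], [0, R₂₂]]` is a partial QR factorization with block size `k`,
where `A` is `(k+m') × (k+n')`, `Q` is orthogonal and `R₁₁` is `k × k` upper triangular. -/
def PartialQR {k m' n' : ℕ} (A : Matrix (Fin (k + m')) (Fin (k + n')) ℝ)
    (Q : Matrix (Fin (k + m')) (Fin (k + m')) ℝ)
    (R11 : Matrix (Fin k) (Fin k) ℝ) (R12 : Matrix (Fin k) (Fin n') ℝ)
    (R22 : Matrix (Fin m') (Fin n') ℝ) : Prop :=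
  Qᵀ * Q = 1 ∧ (∀ i j : Fin k, (j : ℕ) < (i : ℕ) → R11 i j = 0) ∧
    A = Q * (Matrix.reindex finSumFinEquiv finSumFinEquiv (Matrix.fromBlocks R11 R12 0 R22))

/-- `ω_i(A)`: the ℓ₂-norm of the `i`-th row of `A⁻¹`. -/
noncomputable def omega_ {k : ℕ} (A : Matrix (Fin k) (Fin k) ℝ) (i : Fin k) : ℝ :=
  norm2 (fun l => A⁻¹ i l)

/-- `γ_j(B)`: the ℓ₂-norm of the `j`-th column of `B`. -/
noncomputable def gamma_ {p q : ℕ} (B : Matrix (Fin p) (Fin q) ℝ) (j : Fin q) : ℝ :=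
  norm2 (fun l => B l j)

/-- `ρ(R, k)` for `R = [[R₁₁, R₁₂], [0, R₂₂]]`:
`max_{i,j} sqrt(((R₁₁⁻¹R₁₂)_{i,j})² + ω_i(R₁₁)²·γ_j(R₂₂)²)`. -/
noncomputable def rho {k m' n' : ℕ} (R11 : Matrix (Fin k) (Fin k) ℝ)
    (R12 : Matrix (Fin k) (Fin n') ℝ) (R22 : Matrix (Fin m') (Fin n') ℝ) : ℝ :=
  ⨆ i : Fin k, ⨆ j : Fin n',
    Real.sqrt (((R11⁻¹ * R12) i j) ^ 2 + (omega_ R11 i) ^ 2 * (gamma_ R22 j) ^ 2)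

/-- The volume of `A ∈ ℝ^{m×n}`: `V(A) = sqrt(det(AᵀA))`. -/
noncomputable def vol {m n : ℕ} (A : Matrix (Fin m) (Fin n) ℝ) : ℝ :=
  Real.sqrt (Matrix.det (Aᵀ * A))

/-- The angle between two vectors: `arccos(⟨u,w⟩/(‖u‖₂‖w‖₂))`. -/
noncomputable def angleVec {m : ℕ} (u w : Fin m → ℝ) : ℝ :=
  Real.arccos ((u ⬝ᵥ w) / (norm2 u * norm2 w))

/-- The angle between a vector and a subspace:
`arccos( max over nonzero u ∈ K of ⟨v,u⟩/(‖v‖₂‖u‖₂) )`. -/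
noncomputable def angleSub {m : ℕ} (v : Fin m → ℝ) (K : Submodule ℝ (Fin m → ℝ)) : ℝ :=
  Real.arccos (sSup {c : ℝ | ∃ u ∈ K, u ≠ 0 ∧ c = (v ⬝ᵥ u) / (norm2 v * norm2 u)})

/-- `P` is the orthogonal projector onto the subspace `K` (w.r.t. the dot product). -/
def IsOrthProj {m : ℕ} (K : Submodule ℝ (Fin m → ℝ))
    (P : (Fin m → ℝ) →ₗ[ℝ] (Fin m → ℝ)) : Prop :=
  (∀ v, P v ∈ K) ∧ (∀ u ∈ K, P u = u) ∧ (∀ v, ∀ u ∈ K, (v - P v) ⬝ᵥ u = 0)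

/-- Thin QR factorization `A = Q R` with `Q ∈ ℝ^{m×k}` having orthonormal columns and
`R ∈ ℝ^{k×k}` upper triangular. -/
def ThinQR {m k : ℕ} (A Q : Matrix (Fin m) (Fin k) ℝ) (R : Matrix (Fin k) (Fin k) ℝ) : Prop :=
  Qᵀ * Q = 1 ∧ (∀ a b : Fin k, (b : ℕ) < (a : ℕ) → R a b = 0) ∧ A = Q * R

/-- Frobenius norm of a real matrix. -/
noncomputable def frobNorm {p q : ℕ} (A : Matrix (Fin p) (Fin q) ℝ) : ℝ :=
  Real.sqrt (∑ i, ∑ j, A i j ^ 2)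

/-- Spectral norm of a real matrix: sup of `‖Ax‖₂` over the unit ball. -/
noncomputable def specNorm {p q : ℕ} (A : Matrix (Fin p) (Fin q) ℝ) : ℝ :=
  sSup {r : ℝ | ∃ x : Fin q → ℝ, norm2 x ≤ 1 ∧ r = norm2 (A.mulVec x)}
lemma dot_self_nonneg' {m : ℕ} (v : Fin m → ℝ) : 0 ≤ v ⬝ᵥ v :=
  Finset.sum_nonneg fun i _ => mul_self_nonneg _

lemma norm2_sq {m : ℕ} (v : Fin m → ℝ) : norm2 v * norm2 v = v ⬝ᵥ v :=
  Real.mul_self_sqrt (dot_self_nonneg' v)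

lemma norm2_nonneg {m : ℕ} (v : Fin m → ℝ) : 0 ≤ norm2 v := Real.sqrt_nonneg _

lemma residual_mem {m n : ℕ} (M : Matrix (Fin m) (Fin n) ℝ) (b : Fin m → ℝ)
    (x : Fin n → ℝ) : M.mulVec x - b ∈ Submodule.span ℝ
      (Set.range (fun j : Fin n => fun i : Fin m => M i j) ∪ {b}) := by
  apply Submodule.sub_mem
  · have : M.mulVec x = ∑ j, x j • (fun i : Fin m => M i j) := by
      funext i
      simp [Matrix.mulVec, dotProduct, Finset.sum_apply, mul_comm]
    rw [this]
    exact Submodule.sum_mem _ fun j _ => Submodule.smul_mem _ _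
      (Submodule.subset_span (Or.inl ⟨j, rfl⟩))
  · exact Submodule.subset_span (Or.inr rfl)

lemma embed_upper {d m : ℕ} {ε : ℝ} {Ω : Matrix (Fin d) (Fin m) ℝ}
    {V : Submodule ℝ (Fin m → ℝ)} (hΩ : IsEmbedding ε Ω V) (hε0 : 0 ≤ ε)
    {v : Fin m → ℝ} (hv : v ∈ V) :
    norm2 (Ω.mulVec v) ≤ Real.sqrt (1 + ε) * norm2 v := by
  have h := hΩ v hv v hv
  rw [abs_le] at h
  have h2 : ε * norm2 v * norm2 v = ε * (v ⬝ᵥ v) := by rw [mul_assoc, norm2_sq]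
  have key : (Ω.mulVec v) ⬝ᵥ (Ω.mulVec v) ≤ (1 + ε) * (v ⬝ᵥ v) := by
    nlinarith [h.2, h2]
  calc norm2 (Ω.mulVec v) = Real.sqrt ((Ω.mulVec v) ⬝ᵥ (Ω.mulVec v)) := rfl
    _ ≤ Real.sqrt ((1 + ε) * (v ⬝ᵥ v)) := Real.sqrt_le_sqrt key
    _ = Real.sqrt (1 + ε) * norm2 v := Real.sqrt_mul (by positivity) _

lemma embed_lower {d m : ℕ} {ε : ℝ} {Ω : Matrix (Fin d) (Fin m) ℝ}
    {V : Submodule ℝ (Fin m → ℝ)} (hΩ : IsEmbedding ε Ω V) (hε1 : ε < 1)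
    {v : Fin m → ℝ} (hv : v ∈ V) :
    Real.sqrt (1 - ε) * norm2 v ≤ norm2 (Ω.mulVec v) := by
  have h := hΩ v hv v hv
  rw [abs_le] at h
  have h2 : ε * norm2 v * norm2 v = ε * (v ⬝ᵥ v) := by rw [mul_assoc, norm2_sq]
  have key : (1 - ε) * (v ⬝ᵥ v) ≤ (Ω.mulVec v) ⬝ᵥ (Ω.mulVec v) := by
    nlinarith [h.1, h2]
  calc Real.sqrt (1 - ε) * norm2 v = Real.sqrt ((1 - ε) * (v ⬝ᵥ v)) :=
        (Real.sqrt_mul (by linarith) _).symm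
    _ ≤ Real.sqrt ((Ω.mulVec v) ⬝ᵥ (Ω.mulVec v)) := Real.sqrt_le_sqrt key
    _ = norm2 (Ω.mulVec v) := rfl

/-- sketched least squares preserves the residual norm. -/
theorem stmt_2 {d m n : ℕ} (ε : ℝ) (hε0 : 0 < ε) (hε1 : ε < 1)
    (M : Matrix (Fin m) (Fin n) ℝ) (b : Fin m → ℝ)
    (Ω : Matrix (Fin d) (Fin m) ℝ)
    (hΩ : IsEmbedding ε Ω (Submodule.span ℝ
      (Set.range (fun j : Fin n => fun i : Fin m => M i j) ∪ {b})))
    (xstar xhat : Fin n → ℝ)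
    (hxstar : ∀ x : Fin n → ℝ, norm2 (M.mulVec xstar - b) ≤ norm2 (M.mulVec x - b))
    (hxhat : ∀ x : Fin n → ℝ,
      norm2 (Ω.mulVec (M.mulVec xhat - b)) ≤ norm2 (Ω.mulVec (M.mulVec x - b))) :
    (1 / Real.sqrt (1 + ε)) * norm2 (Ω.mulVec (M.mulVec xhat - b)) ≤
      norm2 (M.mulVec xstar - b) ∧
    norm2 (M.mulVec xstar - b) ≤
      (1 / Real.sqrt (1 - ε)) * norm2 (Ω.mulVec (M.mulVec xhat - b)) := by
  set V := Submodule.span ℝ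
      (Set.range (fun j : Fin n => fun i : Fin m => M i j) ∪ {b})
  have hrs : M.mulVec xstar - b ∈ V := residual_mem M b xstar
  have hrh : M.mulVec xhat - b ∈ V := residual_mem M b xhat
  have hp : (0:ℝ) < Real.sqrt (1 + ε) := Real.sqrt_pos.mpr (by linarith)
  have hq : (0:ℝ) < Real.sqrt (1 - ε) := Real.sqrt_pos.mpr (by linarith)
  constructor
  · rw [div_mul_eq_mul_div, one_mul, div_le_iff₀ hp]
    calc norm2 (Ω.mulVec (M.mulVec xhat - b))
        ≤ norm2 (Ω.mulVec (M.mulVec xstar - b)) := hxhat xstar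
      _ ≤ Real.sqrt (1 + ε) * norm2 (M.mulVec xstar - b) := embed_upper hΩ hε0.le hrs
      _ = norm2 (M.mulVec xstar - b) * Real.sqrt (1 + ε) := mul_comm _ _
  · rw [div_mul_eq_mul_div, one_mul, le_div_iff₀ hq]
    calc norm2 (M.mulVec xstar - b) * Real.sqrt (1 - ε)
        ≤ norm2 (M.mulVec xhat - b) * Real.sqrt (1 - ε) := by
          exact mul_le_mul_of_nonneg_right (hxstar xhat) hq.le
      _ = Real.sqrt (1 - ε) * norm2 (M.mulVec xhat - b) := mul_comm _ _
      _ ≤ norm2 (Ω.mulVec (M.mulVec xhat - b)) := embed_lower hΩ hε1 hrh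
end

section
/- Let 0 < ε < 1, M ∈ ℝ^{m×n}, and let Π be an n×n permutation matrix with MΠ having columns v₁, …, v_n whose first k are linearly independent (1 ≤ k < n). Let MΠ = QR and ΩMΠ = Q^sk R^sk be partial QR factorizations with block size k, with R₁₁ and R₁₁^sk invertible. Let (i₀, j₀) be a pair maximizing, over 1 ≤ i ≤ k and 1 ≤ j ≤ n−k, the quantity sqrt(((R₁₁⁻¹R₁₂)_{i,j})² + ω_i(R₁₁)²·γ_j(R₂₂)²), i.e., ρ(R,k) is attained at (i₀,j₀). If Ω ∈ ℝ^{d×m} is an ε-embedding of the subspace span{v₁, …, v_k, v_{j₀+k}} (a subspace of dimension at most k+1), then ρ(R,k) ≤ √((1+ε)/(1−ε)) · ρ(R^sk,k). -/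
open Matrix

namespace S16

lemma dot_self_nonneg {n : ℕ} (x : Fin n → ℝ) : 0 ≤ x ⬝ᵥ x :=
  Finset.sum_nonneg fun i _ => mul_self_nonneg _

lemma norm2_mul_self {n : ℕ} (x : Fin n → ℝ) : norm2 x * norm2 x = x ⬝ᵥ x :=
  Real.mul_self_sqrt (dot_self_nonneg x)

lemma norm2_sq {n : ℕ} (x : Fin n → ℝ) : norm2 x ^ 2 = x ⬝ᵥ x := by
  rw [sq, norm2_mul_self]

lemma dotBB {N k : ℕ} (B : Matrix (Fin N) (Fin k) ℝ) (x y : Fin k → ℝ) :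
    (B *ᵥ x) ⬝ᵥ (B *ᵥ y) = x ⬝ᵥ ((Bᵀ * B) *ᵥ y) := by
  rw [← mulVec_mulVec, dotProduct_mulVec x, vecMul_transpose]

/-- Pythagoras / minimality. -/
lemma min_aux {N k : ℕ} (B : Matrix (Fin N) (Fin k) ℝ) (r : Fin N → ℝ) (i0 : Fin k)
    (horth : ∀ j, j ≠ i0 → (Bᵀ *ᵥ r) j = 0) (u : Fin k → ℝ) (hu : u i0 = 0) :
    r ⬝ᵥ r ≤ (r + B *ᵥ u) ⬝ᵥ (r + B *ᵥ u) := by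
  have hcross : r ⬝ᵥ (B *ᵥ u) = 0 := by
    rw [dotProduct_mulVec, ← mulVec_transpose]
    rw [dotProduct]
    apply Finset.sum_eq_zero
    intro j _
    by_cases hj : j = i0
    · subst hj; rw [hu, mul_zero]
    · rw [horth j hj, zero_mul]
  have h2 : (r + B *ᵥ u) ⬝ᵥ (r + B *ᵥ u)
      = r ⬝ᵥ r + 2 * (r ⬝ᵥ (B *ᵥ u)) + (B *ᵥ u) ⬝ᵥ (B *ᵥ u) := by
    rw [add_dotProduct, dotProduct_add, dotProduct_add, dotProduct_comm (B *ᵥ u) r]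
    ring
  nlinarith [dot_self_nonneg (B *ᵥ u)]


/-- All residual facts for one side. -/
lemma side_facts {N k : ℕ} (B : Matrix (Fin N) (Fin k) ℝ) (v : Fin N → ℝ) (i0 : Fin k)
    (hG : IsUnit (Bᵀ * B).det) :
    0 < (Bᵀ * B)⁻¹ i0 i0 ∧
    ∃ cb ca : Fin k → ℝ, cb i0 = 0 ∧ ca i0 = 0 ∧
      (∀ j, j ≠ i0 → (Bᵀ *ᵥ (v - B *ᵥ cb)) j = 0) ∧
      (∀ j, j ≠ i0 → (Bᵀ *ᵥ ((fun r => B r i0) - B *ᵥ ca)) j = 0) ∧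
      (v - B *ᵥ cb) ⬝ᵥ (v - B *ᵥ cb)
        = (v ⬝ᵥ v - (Bᵀ *ᵥ v) ⬝ᵥ ((Bᵀ * B)⁻¹ *ᵥ (Bᵀ *ᵥ v)))
          + ((Bᵀ * B)⁻¹ *ᵥ (Bᵀ *ᵥ v)) i0 ^ 2 / (Bᵀ * B)⁻¹ i0 i0 ∧
      ((fun r => B r i0) - B *ᵥ ca) ⬝ᵥ ((fun r => B r i0) - B *ᵥ ca)
        = 1 / (Bᵀ * B)⁻¹ i0 i0 := by
  set G : Matrix (Fin k) (Fin k) ℝ := Bᵀ * B with hGdef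
  set P : Matrix (Fin k) (Fin k) ℝ := G⁻¹ with hPdef
  have hGP : G * P = 1 := Matrix.mul_nonsing_inv G hG
  have hGsymm : Gᵀ = G := by
    rw [hGdef, transpose_mul, transpose_transpose]
  have hPsymm : Pᵀ = P := by
    rw [hPdef, Matrix.transpose_nonsing_inv, hGsymm]
  set e : Fin k → ℝ := Pi.single i0 1 with hedef
  set pe : Fin k → ℝ := P *ᵥ e with hpedef
  have hGpe : G *ᵥ pe = e := by
    rw [hpedef, mulVec_mulVec, hGP, one_mulVec]
  set h : Fin k → ℝ := Bᵀ *ᵥ v with hhdef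
  set α : ℝ := P i0 i0 with hαdef
  set t : ℝ := (P *ᵥ h) i0 with htdef
  have hpei0 : pe i0 = α := by
    simp [hpedef, hedef, Matrix.mulVec_single, hαdef]
  have hze : (B *ᵥ pe) ⬝ᵥ (B *ᵥ pe) = α := by
    rw [dotBB, ← hGdef, hGpe, hedef, dotProduct_single, mul_one, ← hpei0]
  have hαpos : 0 < α := by
    rcases lt_or_eq_of_le (dot_self_nonneg (B *ᵥ pe)) with hlt | heq
    · rwa [hze] at hlt
    · exfalso
      have hz0 : B *ᵥ pe = 0 := by
        rw [← dotProduct_self_eq_zero (v := B *ᵥ pe), ← heq]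
      have h0 : G *ᵥ pe = 0 := by
        rw [hGdef, ← mulVec_mulVec, hz0, mulVec_zero]
      rw [hGpe] at h0
      have := congrFun h0 i0
      simp [hedef] at this
  have hαne : α ≠ 0 := ne_of_gt hαpos
  have key : ∀ c : Fin k → ℝ, Bᵀ *ᵥ (v - B *ᵥ c) = h - G *ᵥ c := by
    intro c
    rw [mulVec_sub, mulVec_mulVec, ← hGdef, ← hhdef]
  have hGPh : G *ᵥ (P *ᵥ h) = h := by
    rw [mulVec_mulVec, hGP, one_mulVec]
  set cb : Fin k → ℝ := P *ᵥ h - (t / α) • pe with hcbdef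
  set ca : Fin k → ℝ := e - (1 / α) • pe with hcadef
  have hcbi0 : cb i0 = 0 := by
    have : cb i0 = (P *ᵥ h) i0 - (t / α) * pe i0 := rfl
    rw [this, hpei0, ← htdef, div_mul_cancel₀ _ hαne, sub_self]
  have hcai0 : ca i0 = 0 := by
    have : ca i0 = e i0 - (1 / α) * pe i0 := rfl
    rw [this, hpei0, hedef, Pi.single_eq_same, one_div, inv_mul_cancel₀ hαne, sub_self]
  have hBtrb : Bᵀ *ᵥ (v - B *ᵥ cb) = (t / α) • e := by
    rw [key, hcbdef, mulVec_sub, mulVec_smul, hGPh, hGpe]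
    abel
  have hcol : (fun r => B r i0) = B *ᵥ e := by
    rw [hedef, Matrix.mulVec_single]
    simp
    rfl
  have hra : (fun r => B r i0) - B *ᵥ ca = B *ᵥ ((1 / α) • pe) := by
    rw [hcol, ← mulVec_sub, hcadef, sub_sub_cancel]
  have hBBpe : Bᵀ *ᵥ (B *ᵥ pe) = e := by
    rw [mulVec_mulVec, ← hGdef, hGpe]
  have hBtra : Bᵀ *ᵥ ((fun r => B r i0) - B *ᵥ ca) = (1 / α) • e := by
    rw [hra, Matrix.mulVec_smul B (1 / α) pe, Matrix.mulVec_smul Bᵀ (1 / α) (B *ᵥ pe), hBBpe]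
  refine ⟨hαpos, cb, ca, hcbi0, hcai0, ?_, ?_, ?_, ?_⟩
  · intro j hj
    rw [hBtrb]
    simp [hedef, Pi.single_eq_of_ne hj]
  · intro j hj
    rw [hBtra]
    simp [hedef, Pi.single_eq_of_ne hj]
  · -- norm of rb
    set rb : Fin N → ℝ := v - B *ᵥ cb with hrbdef
    have h1 : rb ⬝ᵥ (B *ᵥ cb) = 0 := by
      rw [dotProduct_mulVec, ← mulVec_transpose, hrbdef, hBtrb,
        smul_dotProduct, hedef, single_dotProduct, one_mul, hcbi0, smul_eq_mul, mul_zero]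
    have h2 : rb ⬝ᵥ rb = rb ⬝ᵥ v := by
      nth_rewrite 2 [hrbdef]
      rw [dotProduct_sub, h1, sub_zero]
    have hhpe : h ⬝ᵥ pe = t := by
      rw [hpedef, dotProduct_mulVec, ← mulVec_transpose, hPsymm, hedef,
        dotProduct_single, mul_one, htdef]
    have h3 : rb ⬝ᵥ v = v ⬝ᵥ v - (h ⬝ᵥ (P *ᵥ h) - t * t / α) := by
      rw [hrbdef, sub_dotProduct]
      have hBcbv : (B *ᵥ cb) ⬝ᵥ v = h ⬝ᵥ (P *ᵥ h) - t * t / α := by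
        rw [dotProduct_comm, dotProduct_mulVec, ← mulVec_transpose, ← hhdef,
          hcbdef, dotProduct_sub, dotProduct_smul, hhpe, smul_eq_mul,
          dotProduct_comm h (P *ᵥ h)]
        ring
      rw [hBcbv]
    show rb ⬝ᵥ rb = (v ⬝ᵥ v - h ⬝ᵥ (P *ᵥ h)) + (P *ᵥ h) i0 ^ 2 / α
    rw [h2, h3]
    ring
  · -- norm of ra
    show ((fun r => B r i0) - B *ᵥ ca) ⬝ᵥ ((fun r => B r i0) - B *ᵥ ca) = 1 / α
    rw [hra, mulVec_smul, smul_dotProduct, dotProduct_smul, hze,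
      smul_eq_mul, smul_eq_mul]
    field_simp

/-- The key quantity. -/
noncomputable def psi {N k : ℕ} (B : Matrix (Fin N) (Fin k) ℝ) (v : Fin N → ℝ)
    (i0 : Fin k) : ℝ :=
  (((Bᵀ * B)⁻¹ *ᵥ (Bᵀ *ᵥ v)) i0) ^ 2
    + (Bᵀ * B)⁻¹ i0 i0 * (v ⬝ᵥ v - (Bᵀ *ᵥ v) ⬝ᵥ ((Bᵀ * B)⁻¹ *ᵥ (Bᵀ *ᵥ v)))

lemma mulVec_mem_span {N k : ℕ} (B : Matrix (Fin N) (Fin k) ℝ) (c : Fin k → ℝ)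
    (S : Set (Fin N → ℝ)) (hS : ∀ i : Fin k, (fun r => B r i) ∈ S) :
    B *ᵥ c ∈ Submodule.span ℝ S := by
  have : B *ᵥ c = ∑ i : Fin k, c i • (fun r => B r i) := by
    funext r
    simp [Matrix.mulVec, dotProduct, Finset.sum_apply, mul_comm]
  rw [this]
  exact Submodule.sum_mem _ fun i _ =>
    Submodule.smul_mem _ _ (Submodule.subset_span (hS i))

lemma core {N d k : ℕ} (B : Matrix (Fin N) (Fin k) ℝ) (v : Fin N → ℝ)
    (Ω : Matrix (Fin d) (Fin N) ℝ) (ε : ℝ) (hε0 : 0 < ε) (hε1 : ε < 1) (i0 : Fin k)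
    (hG : IsUnit (Bᵀ * B).det) (hGs : IsUnit ((Ω * B)ᵀ * (Ω * B)).det)
    (hemb : ∀ x : Fin N → ℝ,
      x ∈ Submodule.span ℝ ((Set.range fun i : Fin k => fun r => B r i) ∪ {v}) →
      (1 - ε) * (x ⬝ᵥ x) ≤ (Ω *ᵥ x) ⬝ᵥ (Ω *ᵥ x) ∧
        (Ω *ᵥ x) ⬝ᵥ (Ω *ᵥ x) ≤ (1 + ε) * (x ⬝ᵥ x)) :
    psi B v i0 ≤ (1 + ε) / (1 - ε) * psi (Ω * B) (Ω *ᵥ v) i0 := by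
  obtain ⟨hα, cb, ca, hcb0, hca0, horthb, hortha, hXb, hXa⟩ := side_facts B v i0 hG
  obtain ⟨hα', cb', ca', hcb0', hca0', horthb', hortha', hXb', hXa'⟩ :=
    side_facts (Ω * B) (Ω *ᵥ v) i0 hGs
  set V : Submodule ℝ (Fin N → ℝ) :=
    Submodule.span ℝ ((Set.range fun i : Fin k => fun r => B r i) ∪ {v}) with hVdef
  have hmemcol : ∀ i : Fin k, (fun r => B r i) ∈
      ((Set.range fun i : Fin k => fun r => B r i) ∪ {v} : Set (Fin N → ℝ)) :=
    fun i => Set.mem_union_left _ ⟨i, rfl⟩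
  have hvV : v ∈ V := Submodule.subset_span (Set.mem_union_right _ rfl)
  have hBcV : ∀ c : Fin k → ℝ, B *ᵥ c ∈ V :=
    fun c => mulVec_mem_span B c _ hmemcol
  -- abbreviations
  set α : ℝ := (Bᵀ * B)⁻¹ i0 i0
  set t : ℝ := ((Bᵀ * B)⁻¹ *ᵥ (Bᵀ *ᵥ v)) i0
  set s : ℝ := v ⬝ᵥ v - (Bᵀ *ᵥ v) ⬝ᵥ ((Bᵀ * B)⁻¹ *ᵥ (Bᵀ *ᵥ v))
  set α' : ℝ := ((Ω * B)ᵀ * (Ω * B))⁻¹ i0 i0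
  set t' : ℝ := (((Ω * B)ᵀ * (Ω * B))⁻¹ *ᵥ ((Ω * B)ᵀ *ᵥ (Ω *ᵥ v))) i0
  set s' : ℝ := (Ω *ᵥ v) ⬝ᵥ (Ω *ᵥ v)
    - ((Ω * B)ᵀ *ᵥ (Ω *ᵥ v)) ⬝ᵥ (((Ω * B)ᵀ * (Ω * B))⁻¹ *ᵥ ((Ω * B)ᵀ *ᵥ (Ω *ᵥ v)))
  set X : ℝ := (v - B *ᵥ cb) ⬝ᵥ (v - B *ᵥ cb) with hXdef
  set X' : ℝ := ((Ω *ᵥ v) - (Ω * B) *ᵥ cb') ⬝ᵥ ((Ω *ᵥ v) - (Ω * B) *ᵥ cb') with hX'def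
  -- (I1): X' ≥ (1-ε) X
  have hsub : ∀ c : Fin k → ℝ, (Ω *ᵥ v) - (Ω * B) *ᵥ c = Ω *ᵥ (v - B *ᵥ c) := by
    intro c
    rw [mulVec_sub, mulVec_mulVec]
  have hI1 : (1 - ε) * X ≤ X' := by
    have hz : v - B *ᵥ cb' ∈ V := Submodule.sub_mem _ hvV (hBcV cb')
    have h1 : X ≤ (v - B *ᵥ cb') ⬝ᵥ (v - B *ᵥ cb') := by
      have hrw : v - B *ᵥ cb' = (v - B *ᵥ cb) + B *ᵥ (cb - cb') := by
        rw [mulVec_sub]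
        abel
      rw [hXdef, hrw]
      exact min_aux B (v - B *ᵥ cb) i0 horthb (cb - cb')
        (by rw [Pi.sub_apply, hcb0, hcb0', sub_self])
    have h2 := (hemb _ hz).1
    rw [hX'def]
    calc (1 - ε) * X ≤ (1 - ε) * ((v - B *ᵥ cb') ⬝ᵥ (v - B *ᵥ cb')) := by
          apply mul_le_mul_of_nonneg_left h1 (by linarith)
      _ ≤ (Ω *ᵥ (v - B *ᵥ cb')) ⬝ᵥ (Ω *ᵥ (v - B *ᵥ cb')) := h2
      _ = _ := by rw [hsub]
  -- (I2)
  have hI2 : (1 : ℝ) / α' ≤ (1 + ε) / α := by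
    have hcolrw : (fun r => (Ω * B) r i0) = Ω *ᵥ (fun r => B r i0) := by
      funext r
      simp [Matrix.mul_apply, Matrix.mulVec, dotProduct]
    have hra2 : (fun r => (Ω * B) r i0) - (Ω * B) *ᵥ ca
        = Ω *ᵥ ((fun r => B r i0) - B *ᵥ ca) := by
      rw [hcolrw, mulVec_sub Ω, mulVec_mulVec]
    have hmemra : (fun r => B r i0) - B *ᵥ ca ∈ V :=
      Submodule.sub_mem _ (Submodule.subset_span (hmemcol i0)) (hBcV ca)
    have h1 : ((fun r => (Ω * B) r i0) - (Ω * B) *ᵥ ca') ⬝ᵥ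
        ((fun r => (Ω * B) r i0) - (Ω * B) *ᵥ ca')
        ≤ ((fun r => (Ω * B) r i0) - (Ω * B) *ᵥ ca) ⬝ᵥ
          ((fun r => (Ω * B) r i0) - (Ω * B) *ᵥ ca) := by
      have hrw : (fun r => (Ω * B) r i0) - (Ω * B) *ᵥ ca
          = ((fun r => (Ω * B) r i0) - (Ω * B) *ᵥ ca') + (Ω * B) *ᵥ (ca' - ca) := by
        rw [mulVec_sub]
        abel
      rw [hrw]
      exact min_aux (Ω * B) _ i0 hortha' (ca' - ca)
        (by rw [Pi.sub_apply, hca0, hca0', sub_self])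
    have h2 := (hemb _ hmemra).2
    rw [hXa'] at h1
    calc (1 : ℝ) / α' ≤ _ := h1
      _ = (Ω *ᵥ ((fun r => B r i0) - B *ᵥ ca)) ⬝ᵥ
            (Ω *ᵥ ((fun r => B r i0) - B *ᵥ ca)) := by rw [hra2]
      _ ≤ (1 + ε) * (((fun r => B r i0) - B *ᵥ ca) ⬝ᵥ ((fun r => B r i0) - B *ᵥ ca)) := h2
      _ = (1 + ε) / α := by rw [hXa, mul_one_div]
  -- identities psi = α * X etc.
  have harith : ∀ a b c : ℝ, a ≠ 0 → b ^ 2 + a * c = a * (c + b ^ 2 / a) := by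
    intro a b c ha
    field_simp
    ring
  have hψ : psi B v i0 = α * X := by
    rw [hXb]
    exact harith α t s (ne_of_gt hα)
  have hψ' : psi (Ω * B) (Ω *ᵥ v) i0 = α' * X' := by
    rw [hXb']
    exact harith α' t' s' (ne_of_gt hα')
  -- conclude
  have hαα' : α ≤ (1 + ε) * α' := by
    rw [div_le_div_iff₀ hα' hα] at hI2
    linarith
  have hXnn : 0 ≤ X := by rw [hXdef]; exact dot_self_nonneg _
  have hε1' : (0 : ℝ) < 1 - ε := by linarith
  rw [hψ, hψ', div_mul_eq_mul_div, le_div_iff₀ hε1']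
  have k1 : (0:ℝ) ≤ (1 - ε) * X := mul_nonneg hε1'.le hXnn
  have k2 : α * ((1 - ε) * X) ≤ ((1 + ε) * α') * ((1 - ε) * X) :=
    mul_le_mul_of_nonneg_right hαα' k1
  have k3 : ((1 + ε) * α') * ((1 - ε) * X) ≤ ((1 + ε) * α') * X' :=
    mul_le_mul_of_nonneg_left hI1 (mul_nonneg (by linarith) hα'.le)
  nlinarith [k2, k3]

lemma gram_facts {k m' n' : ℕ} (A : Matrix (Fin (k + m')) (Fin (k + n')) ℝ)
    (Q : Matrix (Fin (k + m')) (Fin (k + m')) ℝ)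
    (R11 : Matrix (Fin k) (Fin k) ℝ) (R12 : Matrix (Fin k) (Fin n') ℝ)
    (R22 : Matrix (Fin m') (Fin n') ℝ)
    (hQR : PartialQR A Q R11 R12 R22) (hR11 : IsUnit R11.det)
    (i0 : Fin k) (j0 : Fin n')
    (B : Matrix (Fin (k + m')) (Fin k) ℝ) (hB : ∀ r i, B r i = A r (Fin.castAdd n' i))
    (v : Fin (k + m') → ℝ) (hv : ∀ r, v r = A r (Fin.natAdd k j0)) :
    Bᵀ * B = R11ᵀ * R11 ∧
    ((Bᵀ * B)⁻¹ *ᵥ (Bᵀ *ᵥ v)) i0 = (R11⁻¹ * R12) i0 j0 ∧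
    (Bᵀ * B)⁻¹ i0 i0 = omega_ R11 i0 ^ 2 ∧
    v ⬝ᵥ v - (Bᵀ *ᵥ v) ⬝ᵥ ((Bᵀ * B)⁻¹ *ᵥ (Bᵀ *ᵥ v)) = gamma_ R22 j0 ^ 2 := by
  obtain ⟨hQ, _, hA⟩ := hQR
  set C := Matrix.reindex finSumFinEquiv finSumFinEquiv (Matrix.fromBlocks R11 R12 0 R22)
    with hCdef
  set C1 : Matrix (Fin (k + m')) (Fin k) ℝ :=
    Matrix.of (fun l i => C l (Fin.castAdd n' i)) with hC1def
  set w : Fin (k + m') → ℝ := fun l => C l (Fin.natAdd k j0) with hwdef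
  have hC1entry : ∀ (l : Fin k ⊕ Fin m') (i : Fin k),
      C1 (finSumFinEquiv l) i = Sum.elim (fun a => R11 a i) (fun _ => 0) l := by
    rintro (a | a) i <;>
      simp [hC1def, hCdef, Matrix.reindex_apply, Matrix.fromBlocks]
  have hwentry : ∀ (l : Fin k ⊕ Fin m'),
      w (finSumFinEquiv l) = Sum.elim (fun a => R12 a j0) (fun a => R22 a j0) l := by
    rintro (a | a) <;>
      simp [hwdef, hCdef, Matrix.reindex_apply, Matrix.fromBlocks]
  have hBQC1 : B = Q * C1 := by
    ext r i
    rw [hB, hA, Matrix.mul_apply, Matrix.mul_apply]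
    rfl
  have hvQw : v = Q *ᵥ w := by
    funext r
    rw [hv, hA, Matrix.mul_apply]
    rfl
  -- Gram identity
  have hGram : Bᵀ * B = C1ᵀ * C1 := by
    rw [hBQC1, Matrix.transpose_mul, Matrix.mul_assoc, ← Matrix.mul_assoc Qᵀ Q C1, hQ,
      Matrix.one_mul]
  have hG : Bᵀ * B = R11ᵀ * R11 := by
    rw [hGram]
    ext i i'
    rw [Matrix.mul_apply, Matrix.mul_apply]
    rw [← Equiv.sum_comp finSumFinEquiv
      (fun l => C1ᵀ i l * C1 l i')]
    rw [Fintype.sum_sum_type]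
    simp only [Matrix.transpose_apply]
    simp only [hC1entry]
    simp
  -- h identity
  have hh : Bᵀ *ᵥ v = R11ᵀ *ᵥ (fun l => R12 l j0) := by
    rw [hBQC1, hvQw, Matrix.transpose_mul]
    have hassoc : (C1ᵀ * Qᵀ) *ᵥ (Q *ᵥ w) = C1ᵀ *ᵥ ((Qᵀ * Q) *ᵥ w) := by
      rw [Matrix.mulVec_mulVec, Matrix.mulVec_mulVec, Matrix.mul_assoc]
    rw [hassoc, hQ, Matrix.one_mulVec]
    funext i
    rw [Matrix.mulVec, dotProduct, Matrix.mulVec, dotProduct]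
    rw [← Equiv.sum_comp finSumFinEquiv (fun l => C1ᵀ i l * w l)]
    rw [Fintype.sum_sum_type]
    simp only [Matrix.transpose_apply, hC1entry, hwentry]
    simp
  have hR11Tdet : IsUnit R11ᵀ.det := by rwa [Matrix.det_transpose]
  have hGinv : (Bᵀ * B)⁻¹ = R11⁻¹ * (R11ᵀ)⁻¹ := by
    rw [hG, Matrix.mul_inv_rev]
  have hinvh : (Bᵀ * B)⁻¹ *ᵥ (Bᵀ *ᵥ v) = R11⁻¹ *ᵥ (fun l => R12 l j0) := by
    rw [hGinv, hh, ← Matrix.mulVec_mulVec, Matrix.mulVec_mulVec (fun l => R12 l j0) R11ᵀ⁻¹ R11ᵀ,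
      Matrix.nonsing_inv_mul _ hR11Tdet, Matrix.one_mulVec]
  refine ⟨hG, ?_, ?_, ?_⟩
  · rw [hinvh]
    rw [Matrix.mul_apply, Matrix.mulVec, dotProduct]
  · -- omega
    rw [hGinv, Matrix.mul_apply]
    rw [omega_, norm2_sq, dotProduct]
    apply Finset.sum_congr rfl
    intro l _
    rw [← Matrix.transpose_nonsing_inv, Matrix.transpose_apply]
  · -- gamma
    have hvv : v ⬝ᵥ v = w ⬝ᵥ w := by
      rw [hvQw, dotBB, hQ, Matrix.one_mulVec]
    have hww : w ⬝ᵥ w = (fun l => R12 l j0) ⬝ᵥ (fun l => R12 l j0)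
        + (fun l => R22 l j0) ⬝ᵥ (fun l => R22 l j0) := by
      rw [dotProduct, ← Equiv.sum_comp finSumFinEquiv (fun l => w l * w l),
        Fintype.sum_sum_type]
      simp only [hwentry]
      simp [dotProduct]
    have hmid : (Bᵀ *ᵥ v) ⬝ᵥ ((Bᵀ * B)⁻¹ *ᵥ (Bᵀ *ᵥ v))
        = (fun l => R12 l j0) ⬝ᵥ (fun l => R12 l j0) := by
      rw [hinvh, hh, Matrix.mulVec_transpose, ← Matrix.dotProduct_mulVec,
        Matrix.mulVec_mulVec, Matrix.mul_nonsing_inv _ hR11, Matrix.one_mulVec]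
    rw [hvv, hww, hmid, gamma_, norm2_sq]
    ring

end S16

open S16 in
/-- `ρ(R,k) ≤ √((1+ε)/(1−ε))·ρ(R^sk,k)` when `Ω` embeds the span of the first
`k` columns of `MΠ` together with the column at which the maximum is attained. -/
theorem stmt_16 {d' k m' n' : ℕ} (ε : ℝ) (hε0 : 0 < ε) (hε1 : ε < 1)
    (M : Matrix (Fin (k + m')) (Fin (k + n')) ℝ)
    (Pi : Matrix (Fin (k + n')) (Fin (k + n')) ℝ) (hPi : IsPermMatrix Pi)
    (hk : 1 ≤ k) (hn' : 1 ≤ n')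
    (hind : LinearIndependent ℝ (fun i : Fin k => fun r => (M * Pi) r (Fin.castAdd n' i)))
    (Q : Matrix (Fin (k + m')) (Fin (k + m')) ℝ)
    (R11 : Matrix (Fin k) (Fin k) ℝ) (R12 : Matrix (Fin k) (Fin n') ℝ)
    (R22 : Matrix (Fin m') (Fin n') ℝ)
    (hQR : PartialQR (M * Pi) Q R11 R12 R22) (hR11 : IsUnit R11.det)
    (Ω : Matrix (Fin (k + d')) (Fin (k + m')) ℝ)
    (Qsk : Matrix (Fin (k + d')) (Fin (k + d')) ℝ)
    (R11sk : Matrix (Fin k) (Fin k) ℝ) (R12sk : Matrix (Fin k) (Fin n') ℝ)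
    (R22sk : Matrix (Fin d') (Fin n') ℝ)
    (hQRsk : PartialQR (Ω * (M * Pi)) Qsk R11sk R12sk R22sk) (hR11sk : IsUnit R11sk.det)
    (i0 : Fin k) (j0 : Fin n')
    (hmax : ∀ (i : Fin k) (j : Fin n'),
      Real.sqrt (((R11⁻¹ * R12) i j) ^ 2 + (omega_ R11 i) ^ 2 * (gamma_ R22 j) ^ 2) ≤
        Real.sqrt (((R11⁻¹ * R12) i0 j0) ^ 2 + (omega_ R11 i0) ^ 2 * (gamma_ R22 j0) ^ 2))
    (hΩ : IsEmbedding ε Ω (Submodule.span ℝ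
      ((Set.range fun i : Fin k => fun r => (M * Pi) r (Fin.castAdd n' i)) ∪
        {fun r => (M * Pi) r (Fin.natAdd k j0)}))) :
    rho R11 R12 R22 ≤ Real.sqrt ((1 + ε) / (1 - ε)) * rho R11sk R12sk R22sk := by
    classical
  haveI : Nonempty (Fin k) := ⟨⟨0, hk⟩⟩
  haveI : Nonempty (Fin n') := ⟨⟨0, hn'⟩⟩
  set A : Matrix (Fin (k + m')) (Fin (k + n')) ℝ := M * Pi with hAdef
  set B : Matrix (Fin (k + m')) (Fin k) ℝ :=
    Matrix.of (fun r i => A r (Fin.castAdd n' i)) with hBdef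
  set v : Fin (k + m') → ℝ := fun r => A r (Fin.natAdd k j0) with hvdef
  obtain ⟨hG1, hG2, hG3, hG4⟩ := S16.gram_facts A Q R11 R12 R22 hQR hR11 i0 j0 B
    (fun r i => rfl) v (fun r => rfl)
  have hBs : ∀ (r : Fin (k + d')) (i : Fin k), (Ω * B) r i = (Ω * A) r (Fin.castAdd n' i) :=
    fun r i => rfl
  have hvs : ∀ r : Fin (k + d'), (Ω *ᵥ v) r = (Ω * A) r (Fin.natAdd k j0) :=
    fun r => rfl
  obtain ⟨hG1s, hG2s, hG3s, hG4s⟩ := S16.gram_facts (Ω * A) Qsk R11sk R12sk R22sk hQRsk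
    hR11sk i0 j0 (Ω * B) hBs (Ω *ᵥ v) hvs
  have hGu : IsUnit (Bᵀ * B).det := by
    rw [hG1, Matrix.det_mul, Matrix.det_transpose]
    exact hR11.mul hR11
  have hGus : IsUnit ((Ω * B)ᵀ * (Ω * B)).det := by
    rw [hG1s, Matrix.det_mul, Matrix.det_transpose]
    exact hR11sk.mul hR11sk
  -- embedding bounds
  have hemb : ∀ x : Fin (k + m') → ℝ,
      x ∈ Submodule.span ℝ ((Set.range fun i : Fin k => fun r => B r i) ∪ {v}) →
      (1 - ε) * (x ⬝ᵥ x) ≤ (Ω *ᵥ x) ⬝ᵥ (Ω *ᵥ x) ∧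
        (Ω *ᵥ x) ⬝ᵥ (Ω *ᵥ x) ≤ (1 + ε) * (x ⬝ᵥ x) := by
    intro x hx
    have hx' : x ∈ Submodule.span ℝ
        ((Set.range fun i : Fin k => fun r => (M * Pi) r (Fin.castAdd n' i)) ∪
          {fun r => (M * Pi) r (Fin.natAdd k j0)}) := hx
    have habs := hΩ x hx' x hx'
    rw [mul_assoc, S16.norm2_mul_self] at habs
    rw [abs_le] at habs
    constructor <;> nlinarith [habs.1, habs.2]
  have hcore := S16.core B v Ω ε hε0 hε1 i0 hGu hGus hemb
  -- identify psi with the rho entries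
  have hpsi : S16.psi B v i0
      = ((R11⁻¹ * R12) i0 j0) ^ 2 + (omega_ R11 i0) ^ 2 * (gamma_ R22 j0) ^ 2 := by
    rw [S16.psi, hG2, hG3, hG4]
  have hpsis : S16.psi (Ω * B) (Ω *ᵥ v) i0
      = ((R11sk⁻¹ * R12sk) i0 j0) ^ 2 + (omega_ R11sk i0) ^ 2 * (gamma_ R22sk j0) ^ 2 := by
    rw [S16.psi, hG2s, hG3s, hG4s]
  -- rho bounds
  have hrho1 : rho R11 R12 R22 ≤
      Real.sqrt (((R11⁻¹ * R12) i0 j0) ^ 2 + (omega_ R11 i0) ^ 2 * (gamma_ R22 j0) ^ 2) := by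
    rw [rho]
    exact ciSup_le fun i => ciSup_le fun j => hmax i j
  have hrho2 : Real.sqrt (((R11sk⁻¹ * R12sk) i0 j0) ^ 2
      + (omega_ R11sk i0) ^ 2 * (gamma_ R22sk j0) ^ 2) ≤ rho R11sk R12sk R22sk := by
    rw [rho]
    calc Real.sqrt (((R11sk⁻¹ * R12sk) i0 j0) ^ 2
          + (omega_ R11sk i0) ^ 2 * (gamma_ R22sk j0) ^ 2)
        ≤ ⨆ j : Fin n', Real.sqrt (((R11sk⁻¹ * R12sk) i0 j) ^ 2
          + (omega_ R11sk i0) ^ 2 * (gamma_ R22sk j) ^ 2) :=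
          le_ciSup (f := fun j : Fin n' =>
            Real.sqrt (((R11sk⁻¹ * R12sk) i0 j) ^ 2
              + (omega_ R11sk i0) ^ 2 * (gamma_ R22sk j) ^ 2))
            (Set.Finite.bddAbove (Set.finite_range _)) j0
      _ ≤ ⨆ i : Fin k, ⨆ j : Fin n', Real.sqrt (((R11sk⁻¹ * R12sk) i j) ^ 2
          + (omega_ R11sk i) ^ 2 * (gamma_ R22sk j) ^ 2) :=
          le_ciSup (f := fun i : Fin k => ⨆ j : Fin n',
            Real.sqrt (((R11sk⁻¹ * R12sk) i j) ^ 2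
              + (omega_ R11sk i) ^ 2 * (gamma_ R22sk j) ^ 2))
            (Set.Finite.bddAbove (Set.finite_range _)) i0
  have hratio : (0 : ℝ) ≤ (1 + ε) / (1 - ε) := by
    apply div_nonneg <;> linarith
  calc rho R11 R12 R22
      ≤ Real.sqrt (((R11⁻¹ * R12) i0 j0) ^ 2 + (omega_ R11 i0) ^ 2 * (gamma_ R22 j0) ^ 2) :=
        hrho1
    _ = Real.sqrt (S16.psi B v i0) := by rw [hpsi]
    _ ≤ Real.sqrt ((1 + ε) / (1 - ε) * S16.psi (Ω * B) (Ω *ᵥ v) i0) :=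
        Real.sqrt_le_sqrt hcore
    _ = Real.sqrt ((1 + ε) / (1 - ε)) * Real.sqrt (S16.psi (Ω * B) (Ω *ᵥ v) i0) :=
        Real.sqrt_mul hratio _
    _ ≤ Real.sqrt ((1 + ε) / (1 - ε)) * rho R11sk R12sk R22sk := by
        apply mul_le_mul_of_nonneg_left _ (Real.sqrt_nonneg _)
        rw [hpsis]
        exact hrho2
end
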